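/- arXiv:solv-int/9510002 — 4 statements merged into one kernel-verified Lean document; each statement's English description precedes it below -/
import Mathlib

section
/- With the notation of the previous composition rule, the commutator of two integral operators a∂⁻¹b and c∂⁻¹d has no differential part and is given explicitly by: for all continuous f and all x, [a∂⁻¹b, c∂⁻¹d]f(x) = a(x)G(x)·∫₀ˣ d f − a(x)·∫₀ˣ G d f − c(x)H(x)·∫₀ˣ b f + c(x)·∫₀ˣ H b f, where G(x) = ∫₀ˣ b c and H(x) = ∫₀ˣ d a. -/
/-!
Both composites are double integrals over the triangle `0 ≤ z ≤ y ≤ x`: for instance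
`(a∂⁻¹b)(c∂⁻¹d)f(x) = a(x) ∫₀ˣ (bc)(y) ∫₀ʸ (df)(z) dz dy`. Integrating by parts against the
primitive `G` of `bc` turns the inner integral into `G(x) ∫₀ˣ df − ∫₀ˣ G df`, and likewise with
the primitive `H` of `da` for the other composite.
-/

open intervalIntegral

theorem integral_mul_primitive_eq_sub {A : Type*} [NormedRing A] [NormedAlgebra ℝ A]
    [CompleteSpace A] {g h : ℝ → A} (hg : Continuous g) (hh : Continuous h) (a b : ℝ) :
    ∫ y in a..b, g y * ∫ z in a..y, h z
      = (∫ y in a..b, g y) * (∫ y in a..b, h y) - ∫ y in a..b, (∫ z in a..y, g z) * h y := by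
  have parts := integral_mul_deriv_eq_deriv_mul
    (fun y _ ↦ (hg.integral_hasStrictDerivAt a y).hasDerivAt)
    (fun y _ ↦ (hh.integral_hasStrictDerivAt a y).hasDerivAt)
    (hg.intervalIntegrable a b) (hh.intervalIntegrable a b)
  rw [parts, integral_same, zero_mul, sub_zero, sub_sub_cancel]

/-- The commutator of two integral operators `a∂⁻¹b`, `c∂⁻¹d` has no differential part:
`[a∂⁻¹b, c∂⁻¹d]f(x) = aG∫₀ˣ d f − a∫₀ˣ G d f − cH∫₀ˣ b f + c∫₀ˣ H b f`,
where `G(x) = ∫₀ˣ b c` and `H(x) = ∫₀ˣ d a`. -/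
theorem integral_op_commutator
    (a b c d f : ℝ → ℝ)
    (ha : Continuous a) (hb : Continuous b) (hc : Continuous c)
    (hd : Continuous d) (hf : Continuous f) :
    ∀ x : ℝ,
      (a x * ∫ y in (0:ℝ)..x, b y * (c y * ∫ z in (0:ℝ)..y, d z * f z))
      - (c x * ∫ y in (0:ℝ)..x, d y * (a y * ∫ z in (0:ℝ)..y, b z * f z))
      = a x * (∫ y in (0:ℝ)..x, b y * c y) * (∫ y in (0:ℝ)..x, d y * f y)
        - a x * (∫ y in (0:ℝ)..x, (∫ z in (0:ℝ)..y, b z * c z) * (d y * f y))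
        - c x * (∫ y in (0:ℝ)..x, d y * a y) * (∫ y in (0:ℝ)..x, b y * f y)
        + c x * (∫ y in (0:ℝ)..x, (∫ z in (0:ℝ)..y, d z * a z) * (b y * f y)) := by
  intro x
  conv_lhs => simp only [← mul_assoc]
  rw [integral_mul_primitive_eq_sub (g := fun y ↦ b y * c y) (h := fun z ↦ d z * f z)
      (hb.mul hc) (hd.mul hf),
    integral_mul_primitive_eq_sub (g := fun y ↦ d y * a y) (h := fun z ↦ b z * f z)
      (hd.mul ha) (hb.mul hf)]
  ring
end

section
/- Let φ, ψ : ℝ → ℝ be smooth and define the operator L acting on smooth functions f by (Lf)(x) = f'(x) + φ(x)·∫₀ˣ ψ(y) f(y) dy, i.e. L = ∂ + φ∂⁻¹ψ. Then for every smooth f with f(0) = 0 and every x: L(Lf)(x) = f''(x) + 2φ(x)ψ(x)f(x) + (φ'(x) + φ(x)∫₀ˣ ψφ)·∫₀ˣ ψ f + φ(x)·∫₀ˣ (−ψ'(y) − ψ(y)∫₀ʸ ψφ)·f(y) dy. In other words L² = (L²)₊ + [Lφ]∂⁻¹ψ + φ∂⁻¹[L*ψ], where (L²)₊ = ∂² +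 2φψ, [Lφ] = φ' + φ∫₀ˣψφ, and [L*ψ] = −ψ' − ψ∫₀ˣψφ. -/
open intervalIntegral MeasureTheory Set
open scoped ContDiff


/-- The Lax operator `L = ∂ + φ∂⁻¹ψ` acting on functions. -/
noncomputable def Lop (φ ψ : ℝ → ℝ) (g : ℝ → ℝ) : ℝ → ℝ :=
  fun x => deriv g x + φ x * ∫ y in (0:ℝ)..x, ψ y * g y

/-- `L² = (L²)₊ + [Lφ]∂⁻¹ψ + φ∂⁻¹[L*ψ]` for `L = ∂ + φ∂⁻¹ψ`:
case `p = 2, N = 1, n = 1` of Proposition 1. -/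
theorem Lop_sq (φ ψ f : ℝ → ℝ)
    (hφ : ContDiff ℝ (⊤ : ℕ∞) φ) (hψ : ContDiff ℝ (⊤ : ℕ∞) ψ) (hf : ContDiff ℝ (⊤ : ℕ∞) f)
    (hf0 : f 0 = 0) :
    ∀ x : ℝ,
      Lop φ ψ (Lop φ ψ f) x
      = deriv (deriv f) x + 2 * φ x * ψ x * f x
        + (deriv φ x + φ x * ∫ y in (0:ℝ)..x, ψ y * φ y)
            * (∫ y in (0:ℝ)..x, ψ y * f y)
        + φ x * ∫ y in (0:ℝ)..x,
            (-(deriv ψ y) - ψ y * ∫ z in (0:ℝ)..y, ψ z * φ z) * f y := by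
  intro x
  have cφ : Continuous φ := hφ.continuous
  have cψ : Continuous ψ := hψ.continuous
  have cf : Continuous f := hf.continuous
  have dφ : Differentiable ℝ φ := hφ.differentiable (by norm_num)
  have hfi : ContDiff ℝ ∞ f := hf.of_le (by simp)
  have hψi : ContDiff ℝ ∞ ψ := hψ.of_le (by simp)
  have hf' : ContDiff ℝ ∞ (deriv f) := (contDiff_infty_iff_deriv.mp hfi).2
  have cf' : Continuous (deriv f) := hf'.continuous
  have cψ' : Continuous (deriv ψ) := ((contDiff_infty_iff_deriv.mp hψi).2).continuous
  set F : ℝ → ℝ := fun t => ∫ y in (0:ℝ)..t, ψ y * f y with hFdef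
  set G : ℝ → ℝ := fun t => ∫ y in (0:ℝ)..t, ψ y * φ y with hGdef
  have hFd : ∀ t : ℝ, HasDerivAt F (ψ t * f t) t := fun t =>
    ((cψ.mul cf).integral_hasStrictDerivAt 0 t).hasDerivAt
  have hGd : ∀ t : ℝ, HasDerivAt G (ψ t * φ t) t := fun t =>
    ((cψ.mul cφ).integral_hasStrictDerivAt 0 t).hasDerivAt
  have cF : Continuous F :=
    Differentiable.continuous (fun t => (hFd t).differentiableAt)
  have cG : Continuous G :=
    Differentiable.continuous (fun t => (hGd t).differentiableAt)
  -- unfold L(Lf)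
  have key : Lop φ ψ (Lop φ ψ f) x
      = deriv (fun t => deriv f t + φ t * F t) x
        + φ x * ∫ y in (0:ℝ)..x, ψ y * (deriv f y + φ y * F y) := rfl
  -- derivative part
  have hL' : deriv (fun t => deriv f t + φ t * F t) x
      = deriv (deriv f) x + (deriv φ x * F x + φ x * (ψ x * f x)) := by
    have h1 : HasDerivAt (deriv f) (deriv (deriv f) x) x :=
      (hf'.differentiable (by norm_num) x).hasDerivAt
    exact (h1.add (((dφ x).hasDerivAt).mul (hFd x))).deriv
  -- split the integral
  have hsplit : (∫ y in (0:ℝ)..x, ψ y * (deriv f y + φ y * F y))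
      = (∫ y in (0:ℝ)..x, ψ y * deriv f y)
        + ∫ y in (0:ℝ)..x, F y * (ψ y * φ y) := by
    rw [← integral_add (f := fun y => ψ y * deriv f y) (g := fun y => F y * (ψ y * φ y))
        ((cψ.mul cf').intervalIntegrable 0 x)
        ((cF.mul (cψ.mul cφ)).intervalIntegrable 0 x)]
    exact integral_congr fun y _ => by ring
  -- IBP 1
  have ibp1 : (∫ y in (0:ℝ)..x, ψ y * deriv f y)
      = ψ x * f x - ∫ y in (0:ℝ)..x, deriv ψ y * f y := by
    have := integral_mul_deriv_eq_deriv_mul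
      (fun y _ => ((hψ.differentiable (by norm_num)) y).hasDerivAt)
      (fun y _ => ((hf.differentiable (by norm_num)) y).hasDerivAt)
      ((cψ'.intervalIntegrable 0 x)) ((cf'.intervalIntegrable 0 x))
    rw [this, hf0]; ring
  -- IBP 2
  have ibp2 : (∫ y in (0:ℝ)..x, F y * (ψ y * φ y))
      = F x * G x - ∫ y in (0:ℝ)..x, (ψ y * f y) * G y := by
    have := integral_mul_deriv_eq_deriv_mul
      (fun y _ => hFd y) (fun y _ => hGd y)
      (((cψ.mul cf).intervalIntegrable 0 x)) (((cψ.mul cφ).intervalIntegrable 0 x))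
    rw [this]
    have hF0 : F 0 = 0 := integral_same
    rw [hF0]; ring
  -- RHS integral
  have hrhs : (∫ y in (0:ℝ)..x, (-(deriv ψ y) - ψ y * G y) * f y)
      = -(∫ y in (0:ℝ)..x, deriv ψ y * f y)
        - ∫ y in (0:ℝ)..x, (ψ y * f y) * G y := by
    rw [integral_congr (g := fun y => -(deriv ψ y * f y) - ψ y * f y * G y)
          (fun y _ => by ring),
      integral_sub (f := fun y => -(deriv ψ y * f y)) (g := fun y => ψ y * f y * G y)
        (((cψ'.mul cf).neg).intervalIntegrable 0 x)
        ((((cψ.mul cf).mul cG)).intervalIntegrable 0 x),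
      intervalIntegral.integral_neg]
  rw [key, hL', hsplit, ibp1, ibp2, hrhs]
  ring
end

section
/- Let β : Fin 3 → Fin 3 → (ℝ³ → ℝ) be a family of smooth functions and for each a ∈ Fin 3 define the 3×3 matrix-valued function A_a on ℝ³ by (A_a)_{ij} = β_{ij} if i = a and 0 otherwise (so the matrix-valued 1-form A has entries A_{ij} = β_{ij} dx_i). Then the flatness condition ∂_a A_b − ∂_b A_a + A_a A_b − A_b A_a = 0 (as matrix-valued functions, for all a, b ∈ Fin 3) holds if and only if ∂_a β_{bj} = β_{ba} β_{aj} for all a ≠ b and all j ∈ Fin 3. -/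
/-- Partial derivative in the `a`-th coordinate direction of a function on `ℝᴺ`. -/
noncomputable def pd {N : ℕ} (f : (Fin N → ℝ) → ℝ) (a : Fin N) (x : Fin N → ℝ) : ℝ :=
  fderiv ℝ f x (Pi.single a 1)

lemma pd_const_zero {N : ℕ} (a : Fin N) (x : Fin N → ℝ) :
    pd (fun _ => (0 : ℝ)) a x = 0 := by
  simp [pd]

/-- Flatness `∂ₐA_b − ∂_bAₐ + [Aₐ, A_b] = 0` of the connection with
`(Aₐ)ᵢⱼ = βᵢⱼ` for `i = a` and `0` otherwise (i.e. `Aᵢⱼ = βᵢⱼ dxᵢ`) is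
equivalent to the 3-wave equations `∂ₐβ_{bj} = β_{ba}β_{aj}` (`a ≠ b`). -/
theorem chern_simons_flatness_iff_three_wave
    (β : Fin 3 → Fin 3 → (Fin 3 → ℝ) → ℝ)
    (hβ : ∀ i j, ContDiff ℝ (⊤ : ℕ∞) (β i j))
    (A : Fin 3 → (Fin 3 → ℝ) → Matrix (Fin 3) (Fin 3) ℝ)
    (hA : ∀ a x i j, A a x i j = if i = a then β i j x else 0) :
    (∀ a b : Fin 3, ∀ x : Fin 3 → ℝ, ∀ i j : Fin 3,
        pd (fun y => A b y i j) a x - pd (fun y => A a y i j) b x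
          + (A a x * A b x) i j - (A b x * A a x) i j = 0)
    ↔ (∀ a b : Fin 3, a ≠ b → ∀ j : Fin 3, ∀ x : Fin 3 → ℝ,
        pd (β b j) a x = β b a x * β a j x) := by
  have hpd : ∀ (c a : Fin 3) (i j : Fin 3) (x : Fin 3 → ℝ),
      pd (fun y => A c y i j) a x = if i = c then pd (β i j) a x else 0 := by
    intro c a i j x
    have hfe : (fun y => A c y i j) = fun y => if i = c then β i j y else 0 :=
      funext fun y => hA c y i j
    rw [hfe]
    by_cases h : i = c
    · simp [h]
    · simp [h, pd_const_zero]
  have hmul : ∀ (a b : Fin 3) (i j : Fin 3) (x : Fin 3 → ℝ),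
      (A a x * A b x) i j = if i = a then β a b x * β b j x else 0 := by
    intro a b i j x
    rw [Matrix.mul_apply]
    by_cases h : i = a
    · subst h
      rw [Finset.sum_eq_single b]
      · simp [hA]
      · intro k _ hk; simp [hA, hk]
      · simp
    · rw [if_neg h]
      exact Finset.sum_eq_zero fun k _ => by simp [hA, h]
  constructor
  · intro hflat a b hab j x
    have := hflat a b x b j
    rw [hpd, hpd, hmul, hmul] at this
    simp only [if_pos rfl, if_neg (Ne.symm hab), if_neg hab, if_true, ite_true] at this
    linarith
  · intro hw a b x i j
    rw [hpd, hpd, hmul, hmul]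
    by_cases hab : a = b
    · subst hab
      by_cases h : i = a <;> simp [h]
    · by_cases hia : i = a
      · subst hia
        simp only [if_neg hab, if_pos rfl, if_neg (fun h : i = b => hab h), if_true, ite_true]
        have := hw b i (Ne.symm hab) j x
        linarith
      · by_cases hib : i = b
        · subst hib
          simp only [if_pos rfl, if_neg hia, if_true, ite_true]
          have := hw a i hab j x
          linarith
        · simp [hia, hib]
end

section
/- Let β : Fin 3 → Fin 3 → (ℝ³ → ℝ) be smooth functions satisfying ∂_i β_{jk} = β_{ji} β_{ik} for all i ≠ j and all k. Fix k ≠ l and suppose β_{kl} > 0 and β_{lk} > 0 everywhere. Then the function φ = log(β_{kl} β_{lk}) satisfies the Liouville equation ∂_k ∂_l φ = 2 e^{φ}, i.e. ∂_k∂_l log(β_{kl}β_{lk}) = 2 β_{kl} β_{lk}. -/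
lemma pd_add {N : ℕ} {g h : (Fin N → ℝ) → ℝ} {x} (hg : DifferentiableAt ℝ g x)
    (hh : DifferentiableAt ℝ h x) (a : Fin N) :
    pd (fun y => g y + h y) a x = pd g a x + pd h a x := by
  simp [pd, fderiv_fun_add hg hh]

lemma pd_log {N : ℕ} {f : (Fin N → ℝ) → ℝ} (hf : ContDiff ℝ (⊤ : ℕ∞) f) (hpos : ∀ x, 0 < f x)
    (a : Fin N) (x) :
    pd (fun z => Real.log (f z)) a x = (f x)⁻¹ * pd f a x := by
  have h := ((hf.differentiable (by simp) x).hasFDerivAt.log (hpos x).ne').fderiv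
  simp [pd, h]

lemma pd_diff {N : ℕ} {f : (Fin N → ℝ) → ℝ} (hf : ContDiff ℝ (⊤ : ℕ∞) f) (a : Fin N)
    (x : Fin N → ℝ) : DifferentiableAt ℝ (fun y => pd f a y) x := by
  have h2 : DifferentiableAt ℝ (fderiv ℝ f) x :=
    (hf.fderiv_right (m := 1) (WithTop.coe_le_coe.mpr le_top)).differentiable one_ne_zero x
  exact h2.clm_apply (differentiableAt_const _)

lemma pd_comm {N : ℕ} {f : (Fin N → ℝ) → ℝ} (hf : ContDiff ℝ (⊤ : ℕ∞) f) (a b : Fin N) (x) :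
    pd (fun y => pd f a y) b x = pd (fun y => pd f b y) a x := by
  have hder : ∀ y, HasFDerivAt f (fderiv ℝ f y) y :=
    fun y => (hf.differentiable (by simp) y).hasFDerivAt
  have h2 : DifferentiableAt ℝ (fderiv ℝ f) x :=
    (hf.fderiv_right (m := 1) (WithTop.coe_le_coe.mpr le_top)).differentiable one_ne_zero x
  have hsymm := second_derivative_symmetric hder h2.hasFDerivAt
    (Pi.single b 1) (Pi.single a 1)
  have key : ∀ c : Fin N, fderiv ℝ (fun y => fderiv ℝ f y (Pi.single c 1)) x
      = (fderiv ℝ (fderiv ℝ f) x).flip (Pi.single c 1) := by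
    intro c
    have := (h2.hasFDerivAt.clm_apply (hasFDerivAt_const (Pi.single c 1) x)).fderiv
    rw [this]; ext v; simp
  simp only [pd]
  rw [key a, key b]
  simpa using hsymm

/-- If `∂ᵢβ_{jk} = β_{ji}β_{ik}` for all `i ≠ j` and all `k`, then
`φ = log(β_{kl}β_{lk})` satisfies the Liouville equation `∂ₖ∂ₗφ = 2e^φ`. -/
theorem three_wave_liouville
    (β : Fin 3 → Fin 3 → (Fin 3 → ℝ) → ℝ)
    (hβ : ∀ i j, ContDiff ℝ (⊤ : ℕ∞) (β i j))
    (hwave : ∀ i j k : Fin 3, i ≠ j → ∀ x : Fin 3 → ℝ,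
      pd (β j k) i x = β j i x * β i k x)
    (k l : Fin 3) (hkl : k ≠ l)
    (hpos₁ : ∀ x, 0 < β k l x) (hpos₂ : ∀ x, 0 < β l k x) :
    ∀ x : Fin 3 → ℝ,
      pd (fun y => pd (fun z => Real.log (β k l z * β l k z)) l y) k x
        = 2 * (β k l x * β l k x) := by
  intro x
  set f₂ : (Fin 3 → ℝ) → ℝ := fun z => Real.log (β l k z) with hf₂def
  have hf₂ : ContDiff ℝ (⊤ : ℕ∞) f₂ := (hβ l k).log fun z => (hpos₂ z).ne'
  -- split the log
  have hsplit : (fun z => Real.log (β k l z * β l k z))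
      = fun z => Real.log (β k l z) + f₂ z := by
    funext z; exact Real.log_mul (hpos₁ z).ne' (hpos₂ z).ne'
  -- inner derivative
  have hinner : (fun y => pd (fun z => Real.log (β k l z * β l k z)) l y)
      = fun y => β l l y + pd f₂ l y := by
    funext y
    rw [hsplit, pd_add (((hβ k l).log fun z => (hpos₁ z).ne').differentiable (by simp) y)
      (hf₂.differentiable (by simp) y),
      pd_log (hβ k l) hpos₁, hwave l k l hkl.symm,
      inv_mul_cancel_left₀ (hpos₁ y).ne']
  rw [hinner, pd_add ((hβ l l).differentiable (by simp) x) (pd_diff hf₂ l x),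
    hwave k l l hkl x, pd_comm hf₂ l k x]
  have h2 : (fun y => pd f₂ k y) = fun y => β k k y := by
    funext y
    rw [hf₂def, pd_log (hβ l k) hpos₂, hwave k l k hkl, inv_mul_cancel_left₀ (hpos₂ y).ne']
  rw [h2, hwave l k k hkl.symm x]
  ring
end
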